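/- arXiv:1806.05085 — 7 statements merged into one kernel-verified Lean document; each statement's English description precedes it below -/
import Mathlib

section
/- Let w : [0,∞) → [0,1) be any strictly increasing function and define w̃ : ℝ → (0,1) by w̃(x) = (1 + w(x))/2 for x > 0, w̃(0) = 1/2, and w̃(x) = (1 − w(−x))/2 for x < 0. Then for all strictly increasing functions f₁, f₂ : ℝ → ℝ and all reals x₁ > x₂, (1/2)·w̃(f₁(x₁) − f₂(x₂)) + (1/2)·w̃(f₂(x₁) − f₁(x₂)) > 1/2. Consequently, the randomized canonical estimator—which, given the two reported scores y₁, y₂ under a uniformly random assignment of the two reviewers to the two items, declares item 1 larger with probability w̃(y₁ − y₂) and item 2 larger otherwise—has probability of correctly identifying the larger item strictly greater than 1/2, uniformly over all item values and all strictly increasing calibration functions; i.e., it strictly uniformly dominates the random-guessing estimator. -/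
/-!
`w̃ - 1/2` is an odd function that is strictly increasing on `[0, ∞)`, hence on all of `ℝ`,
so `w̃(x) + w̃(-x) = 1` and `w̃` is strictly increasing. The two score differences
`a = f₁(x₁) - f₂(x₂)` and `b = f₂(x₁) - f₁(x₂)` have `a + b > 0` by monotonicity of `f₁, f₂`,
hence `w̃(a) > w̃(-b) = 1 - w̃(b)`.
-/

open Set

noncomputable def wTilde (w : ℝ → ℝ) (x : ℝ) : ℝ :=
  if 0 < x then (1 + w x) / 2 else if x = 0 then 1 / 2 else (1 - w (-x)) / 2

theorem wTilde_of_pos (w : ℝ → ℝ) {x : ℝ} (hx : 0 < x) : wTilde w x = (1 + w x) / 2 :=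
  if_pos hx

theorem wTilde_add_wTilde_neg (w : ℝ → ℝ) (x : ℝ) : wTilde w x + wTilde w (-x) = 1 := by
  rcases lt_trichotomy 0 x with hx | rfl | hx
  · simp only [wTilde, if_pos hx, if_neg (neg_neg_of_pos hx).not_gt,
      if_neg (neg_ne_zero.mpr hx.ne'), neg_neg]
    ring
  · norm_num [wTilde]
  · simp only [wTilde, if_neg hx.not_gt, if_neg hx.ne, if_pos (neg_pos.mpr hx)]
    ring

theorem wTilde_strictMonoOn_Ici {w : ℝ → ℝ} (hw0 : 0 ≤ w 0) (hw : StrictMonoOn w (Ici 0)) :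
    StrictMonoOn (wTilde w) (Ici 0) := by
  intro a ha b hb hab
  have hb_pos : 0 < b := lt_of_le_of_lt ha hab
  rw [wTilde_of_pos w hb_pos]
  rcases (mem_Ici.mp ha).eq_or_lt with rfl | ha_pos
  · have : w 0 < w b := hw ha hb hab
    norm_num [wTilde]
    linarith
  · rw [wTilde_of_pos w ha_pos]
    linarith [hw ha hb hab]

theorem wTilde_strictMono {w : ℝ → ℝ} (hw0 : 0 ≤ w 0) (hw : StrictMonoOn w (Ici 0)) :
    StrictMono (wTilde w) := by
  have hodd : StrictMono fun x => wTilde w x - 1 / 2 := by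
    refine strictMono_of_odd_strictMonoOn_nonneg (fun x => ?_) fun a ha b hb hab => ?_
    · linarith [wTilde_add_wTilde_neg w x]
    · linarith [wTilde_strictMonoOn_Ici hw0 hw ha hb hab]
  intro a b hab
  linarith [hodd hab]

theorem one_lt_add_of_strictMono_of_add_neg_eq_one {g : ℝ → ℝ} (hg : StrictMono g)
    (hsymm : ∀ x, g x + g (-x) = 1) {a b : ℝ} (hab : 0 < a + b) : 1 < g a + g b := by
  have : g (-b) < g a := hg (by linarith)
  linarith [hsymm b]

theorem canonical_estimator_dominates_random_guessing
    (w : ℝ → ℝ)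
    (hw01 : ∀ x : ℝ, 0 ≤ x → w x ∈ Set.Ico (0 : ℝ) 1)
    (hwmono : ∀ x y : ℝ, 0 ≤ x → x < y → w x < w y)
    (wt : ℝ → ℝ)
    (hwt : ∀ x : ℝ, wt x =
      if 0 < x then (1 + w x) / 2 else if x = 0 then 1 / 2 else (1 - w (-x)) / 2)
    (f₁ f₂ : ℝ → ℝ) (hf₁ : StrictMono f₁) (hf₂ : StrictMono f₂)
    (x₁ x₂ : ℝ) (hx : x₂ < x₁) :
    (1 / 2 : ℝ) < (1 / 2) * wt (f₁ x₁ - f₂ x₂) + (1 / 2) * wt (f₂ x₁ - f₁ x₂) := by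
  obtain rfl : wt = wTilde w := funext hwt
  have hmono : StrictMono (wTilde w) :=
    wTilde_strictMono (hw01 0 le_rfl).1 fun x hx y _ hxy => hwmono x y hx hxy
  have hsum : 0 < (f₁ x₁ - f₂ x₂) + (f₂ x₁ - f₁ x₂) := by linarith [hf₁ hx, hf₂ hx]
  linarith [one_lt_add_of_strictMono_of_add_neg_eq_one hmono (wTilde_add_wTilde_neg w) hsum]
end

section
/- Let m ≥ 2 be even and define biases c_j = j − 1 for 1 ≤ j ≤ m − 1 and c_m = m(m−1)/2. Then for all x, x' ∈ (0,1) and every partition of {1,…,m} into two sets S and S' with |S| = |S'| = m/2 and m ∈ S', the sum Σ_{j∈S'} (x + c_j) is strictly greater than Σ_{j∈S} (x' + c_j). In particular, for the calibration functions f_j(y) = y + c_j, whichever item is graded by reviewer m receives the strictly larger sum (equivalently, mean) of scores, regardless of the items' values in (0,1). -/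
/- STATEMENT 4: Let `m ≥ 2` be even, with biases `c_j = j − 1` for `1 ≤ j ≤ m − 1` and
`c_m = m(m−1)/2`. For all `x, x' ∈ (0,1)` and every partition of `{1,…,m}` into sets `S, S'`
of size `m/2` each with `m ∈ S'`, we have `Σ_{j∈S'} (x + c_j) > Σ_{j∈S} (x' + c_j)`:
whichever item is graded by reviewer `m` receives the strictly larger sum of scores. -/
theorem biased_reviewer_determines_mean_estimator
    (m : ℕ) (hm : 2 ≤ m) (hme : Even m)
    (c : ℕ → ℝ)
    (hc : ∀ j : ℕ, 1 ≤ j → j < m → c j = (j : ℝ) - 1)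
    (hcm : c m = ((m : ℝ) * ((m : ℝ) - 1)) / 2)
    (x x' : ℝ) (hx : x ∈ Set.Ioo (0 : ℝ) 1) (hx' : x' ∈ Set.Ioo (0 : ℝ) 1)
    (S S' : Finset ℕ)
    (hunion : S ∪ S' = Finset.Icc 1 m) (hdisj : Disjoint S S')
    (hcardS : S.card = m / 2) (hcardS' : S'.card = m / 2)
    (hmS' : m ∈ S') :
    ∑ j ∈ S, (x' + c j) < ∑ j ∈ S', (x + c j) := by
  obtain ⟨hx0, hx1⟩ := hx
  obtain ⟨hx'0, hx'1⟩ := hx'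
  have hSsub : ∀ j ∈ S, j ∈ Finset.Icc 1 m := fun j hj => hunion ▸ Finset.mem_union_left _ hj
  have hS'sub : ∀ j ∈ S', j ∈ Finset.Icc 1 m := fun j hj => hunion ▸ Finset.mem_union_right _ hj
  have hSne : S.Nonempty := by
    rw [← Finset.card_pos, hcardS]; omega
  -- upper bound on the S sum
  have h1 : ∑ j ∈ S, (x' + c j) < (S.card : ℝ) * ((m : ℝ) - 1) := by
    have hlt : ∑ j ∈ S, (x' + c j) < ∑ _j ∈ S, ((m : ℝ) - 1) := by
      apply Finset.sum_lt_sum_of_nonempty hSne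
      intro j hj
      have hjm := Finset.mem_Icc.mp (hSsub j hj)
      have hjne : j < m := by
        rcases lt_or_eq_of_le hjm.2 with h | h
        · exact h
        · exact absurd (h ▸ hj) (Finset.disjoint_right.mp hdisj hmS')
      rw [hc j hjm.1 hjne]
      have : (j : ℝ) + 1 ≤ (m : ℝ) := by exact_mod_cast hjne
      linarith
    rw [Finset.sum_const, nsmul_eq_mul] at hlt; exact hlt
  -- middle comparison
  have h2 : (S.card : ℝ) * ((m : ℝ) - 1) ≤ c m := by
    obtain ⟨k, hk⟩ := hme
    have hk2 : m = 2 * k := by omega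
    have hcard : S.card = k := by omega
    rw [hcm, hcard, hk2]
    push_cast
    ring_nf
    nlinarith [hm, hk2]
  -- lower bound on the S' sum
  have h3 : c m < ∑ j ∈ S', (x + c j) := by
    have hsum : ∑ j ∈ S'.erase m, (x + c j) + (x + c m) = ∑ j ∈ S', (x + c j) :=
      Finset.sum_erase_add S' _ hmS'
    have hnn : 0 ≤ ∑ j ∈ S'.erase m, (x + c j) := by
      apply Finset.sum_nonneg
      intro j hj
      have hjm := Finset.mem_Icc.mp (hS'sub j (Finset.mem_of_mem_erase hj))
      have hjne : j < m := lt_of_le_of_ne hjm.2 (Finset.ne_of_mem_erase hj)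
      rw [hc j hjm.1 hjne]
      have : (1 : ℝ) ≤ (j : ℝ) := by exact_mod_cast hjm.1
      linarith
    linarith [hsum]
  linarith
end

section
/- For every even m ≥ 2 there exist strictly increasing calibration functions f₁, …, f_m : ℝ → ℝ and distinct values x₁, x₂ ∈ (0,1) such that for every partition of {1,…,m} into S₁ (the reviewers grading item 1) and S₂ (the reviewers grading item 2) with |S₁| = |S₂| = m/2, the mean of {f_j(x₁) : j ∈ S₁} exceeds the mean of {f_j(x₂) : j ∈ S₂} if and only if m ∈ S₁. Hence the output of the mean estimator is determined solely by which item reviewer m grades, independent of the item values, and under the uniformly random balanced assignment the mean estimator is correct with probability exactly 1/2—so the mean estimator does not strictly uniformly dominate the random-guessing estimator. -/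
lemma sum_with_m (m : ℕ) (f : ℕ → ℝ → ℝ)
    (hf : ∀ j x, f j x = if j = m then x + m else x)
    (S : Finset ℕ) (x : ℝ) (hx : x ∈ Set.Ioo (0:ℝ) 1) (hmS : m ∈ S) :
    (m : ℝ) < ∑ j ∈ S, f j x := by
  have h2 : (0:ℝ) ≤ ∑ j ∈ S.erase m, f j x := by
    apply Finset.sum_nonneg
    intro j hj
    rw [hf]
    split <;> nlinarith [hx.1]
  rw [← Finset.add_sum_erase S (fun j => f j x) hmS]
  have h3 : f m x = x + m := by rw [hf, if_pos rfl]
  simp only [h3]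
  nlinarith [hx.1]

lemma sum_without_m (m : ℕ) (f : ℕ → ℝ → ℝ)
    (hf : ∀ j x, f j x = if j = m then x + m else x)
    (S : Finset ℕ) (x : ℝ) (hx : x ∈ Set.Ioo (0:ℝ) 1) (hmS : m ∉ S) :
    ∑ j ∈ S, f j x ≤ S.card := by
  calc ∑ j ∈ S, f j x ≤ ∑ j ∈ S, 1 := by
        apply Finset.sum_le_sum
        intro j hj
        rw [hf, if_neg (by rintro rfl; exact hmS hj)]
        exact le_of_lt hx.2
    _ = S.card := by simp

/- STATEMENT 6: For every even `m ≥ 2` there exist strictly increasing calibration functions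
`f₁, …, f_m : ℝ → ℝ` and distinct values `x₁, x₂ ∈ (0,1)` such that for every balanced
partition of `{1,…,m}` into `S₁` (reviewers grading item 1) and `S₂` (reviewers grading
item 2), the mean of the scores for item 1 exceeds the mean of the scores for item 2 if and
only if `m ∈ S₁`. Hence the mean estimator's output is determined solely by which item
reviewer `m` grades, and the mean estimator does not strictly uniformly dominate random
guessing. -/
theorem mean_estimator_fails
    (m : ℕ) (hm : 2 ≤ m) (hme : Even m) :
    ∃ (f : ℕ → ℝ → ℝ) (x₁ x₂ : ℝ),
      (∀ j ∈ Finset.Icc 1 m, StrictMono (f j)) ∧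
      x₁ ∈ Set.Ioo (0 : ℝ) 1 ∧ x₂ ∈ Set.Ioo (0 : ℝ) 1 ∧ x₁ ≠ x₂ ∧
      ∀ S₁ S₂ : Finset ℕ,
        S₁ ∪ S₂ = Finset.Icc 1 m → Disjoint S₁ S₂ →
        S₁.card = m / 2 → S₂.card = m / 2 →
        ((∑ j ∈ S₂, f j x₂) / (S₂.card : ℝ) < (∑ j ∈ S₁, f j x₁) / (S₁.card : ℝ)
          ↔ m ∈ S₁) := by
  refine ⟨fun j x => if j = m then x + m else x, 1/3, 1/2,
    ?_, by norm_num, by norm_num, by norm_num, ?_⟩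
  · intro j _
    intro a b hab
    dsimp only
    split <;> simpa
  · intro S₁ S₂ hU hD h1 h2
    have hf : ∀ j (x : ℝ), (fun j x => if j = m then x + (m:ℝ) else x) j x
        = if j = m then x + m else x := fun _ _ => rfl
    have hx1 : (1/3 : ℝ) ∈ Set.Ioo (0:ℝ) 1 := by norm_num
    have hx2 : (1/2 : ℝ) ∈ Set.Ioo (0:ℝ) 1 := by norm_num
    have hmU : m ∈ S₁ ∪ S₂ := by
      rw [hU]; exact Finset.mem_Icc.2 ⟨by omega, le_refl m⟩
    have hk : 0 < m / 2 := by omega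
    have hkm : (m / 2 : ℕ) < m := by omega
    have hc1 : (0:ℝ) < (S₁.card : ℝ) := by rw [h1]; exact_mod_cast hk
    have hc2 : (0:ℝ) < (S₂.card : ℝ) := by rw [h2]; exact_mod_cast hk
    rw [div_lt_div_iff₀ hc2 hc1, h1, h2]
    beta_reduce
    constructor
    · intro h
      by_contra hmn
      have hm2 : m ∈ S₂ := (Finset.mem_union.1 hmU).resolve_left hmn
      have b1 := sum_with_m m _ hf S₂ (1/2) hx2 hm2
      have b2 := sum_without_m m _ hf S₁ (1/3) hx1 hmn
      rw [h1] at b2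
      have : ((m/2 : ℕ) : ℝ) < m := by exact_mod_cast hkm
      nlinarith
    · intro hm1
      have hm2 : m ∉ S₂ := Finset.disjoint_left.1 hD hm1
      have b1 := sum_with_m m _ hf S₁ (1/3) hx1 hm1
      have b2 := sum_without_m m _ hf S₂ (1/2) hx2 hm2
      rw [h2] at b2
      have hkm' : ((m/2 : ℕ) : ℝ) < m := by exact_mod_cast hkm
      have hk' : (0:ℝ) < ((m/2 : ℕ) : ℝ) := by exact_mod_cast hk
      exact mul_lt_mul_of_pos_right (lt_trans (lt_of_le_of_lt b2 hkm') b1) hk'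
end

section
/- Let k ≥ 1 and let X₁, …, X_k be independent {0,1}-valued random variables with P(X_i = 1) > 1/2 for every i. Let V = X₁ + ⋯ + X_k. Then P(V > k/2) + (1/2)·P(V = k/2) > 1/2. That is, a majority vote among k independent binary votes, each individually correct with probability strictly exceeding 1/2, and with ties broken by a fair coin, is correct with probability strictly exceeding 1/2. -/
open MeasureTheory ProbabilityTheory

/-!
Let `S` count the correct votes among `n` independent ones and put
`Δₙ(t) = P(S ≥ t) - P(n - S ≥ t)`. Adding an independent vote, correct with probability `p`, gives
`Δₙ₊₁(t) = p Δₙ(t) + (1 - p) Δₙ(t - 1) + (2p - 1) P(S = t - 1)`,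
so for `p > 1/2` induction on the number of votes shows `Δ ≥ 0` everywhere and `Δ > 0` for
`1 ≤ t ≤ n`; the new threshold `t = n + 1` is carried by `P(S = n) ≥ ∏ pᵢ > 0`.
At `t = ⌊k/2⌋ + 1` this reads `P(V > k/2) > P(V < k/2)`, and since `{V > k/2}`, `{V = k/2}`,
`{V < k/2}` partition the space, this is the claim.
-/

namespace ProbabilityTheory

variable {Ω ι : Type*} [MeasurableSpace Ω]

def tailGap (μ : Measure Ω) (S : Ω → ℕ) (n : ℕ) (t : ℤ) : ℝ :=
  μ.real {ω | t ≤ (S ω : ℤ)} - μ.real {ω | t ≤ (n : ℤ) - S ω}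

variable {μ : Measure Ω}

lemma IndepFun.measureReal_setOf_add [IsProbabilityMeasure μ] {Z S : Ω → ℕ}
    (hind : IndepFun Z S μ) (hZ : Measurable Z) (hS : Measurable S)
    (hZval : ∀ ω, Z ω = 0 ∨ Z ω = 1) (P : ℕ → Prop) :
    μ.real {ω | P (Z ω + S ω)}
      = μ.real {ω | Z ω = 1} * μ.real {ω | P (1 + S ω)}
        + (1 - μ.real {ω | Z ω = 1}) * μ.real {ω | P (S ω)} := by
  have hsplit : {ω | P (Z ω + S ω)}
      = (Z ⁻¹' {1} ∩ S ⁻¹' {m | P (1 + m)}) ∪ (Z ⁻¹' {1}ᶜ ∩ S ⁻¹' {m | P m}) := by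
    ext ω
    rcases hZval ω with h | h <;> simp [h]
  have hmul (A B : Set ℕ) :
      μ.real (Z ⁻¹' A ∩ S ⁻¹' B) = μ.real (Z ⁻¹' A) * μ.real (S ⁻¹' B) := by
    simp only [measureReal_def, hind.measure_inter_preimage_eq_mul _ _ .of_discrete .of_discrete,
      ENNReal.toReal_mul]
  have hdisj : Disjoint (Z ⁻¹' {1} ∩ S ⁻¹' {m | P (1 + m)}) (Z ⁻¹' {1}ᶜ ∩ S ⁻¹' {m | P m}) :=
    (disjoint_compl_right.preimage Z).mono Set.inter_subset_left Set.inter_subset_left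
  rw [hsplit, measureReal_union hdisj ((hZ .of_discrete).inter (hS .of_discrete)), hmul, hmul,
    Set.preimage_compl, probReal_compl_eq_one_sub (hZ .of_discrete)]
  rfl

lemma IndepFun.tailGap_add [IsProbabilityMeasure μ] {Z S : Ω → ℕ} (hind : IndepFun Z S μ)
    (hZ : Measurable Z) (hS : Measurable S) (hZval : ∀ ω, Z ω = 0 ∨ Z ω = 1) (n : ℕ) (t : ℤ) :
    tailGap μ (Z + S) (n + 1) t
      = μ.real {ω | Z ω = 1} * tailGap μ S n t
        + (1 - μ.real {ω | Z ω = 1}) * tailGap μ S n (t - 1)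
        + (2 * μ.real {ω | Z ω = 1} - 1) * μ.real {ω | (S ω : ℤ) = t - 1} := by
  have hsucc_of_one : μ.real {ω | t ≤ ((1 + S ω : ℕ) : ℤ)} = μ.real {ω | t - 1 ≤ (S ω : ℤ)} := by
    congr 1; ext ω; simp only [Set.mem_ofPred_eq]; omega
  have hfail_of_one : μ.real {ω | t ≤ ((n + 1 : ℕ) : ℤ) - ((1 + S ω : ℕ) : ℤ)}
      = μ.real {ω | t ≤ (n : ℤ) - S ω} := by
    congr 1; ext ω; simp only [Set.mem_ofPred_eq]; omega
  have hfail_of_zero : μ.real {ω | t ≤ ((n + 1 : ℕ) : ℤ) - (S ω : ℤ)}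
      = μ.real {ω | t - 1 ≤ (n : ℤ) - S ω} := by
    congr 1; ext ω; simp only [Set.mem_ofPred_eq]; omega
  have hsucc_pred : μ.real {ω | t - 1 ≤ (S ω : ℤ)}
      = μ.real {ω | t ≤ (S ω : ℤ)} + μ.real {ω | (S ω : ℤ) = t - 1} := by
    have hunion : {ω | t - 1 ≤ (S ω : ℤ)} = {ω | t ≤ (S ω : ℤ)} ∪ {ω | (S ω : ℤ) = t - 1} := by
      ext ω; simp only [Set.mem_ofPred_eq, Set.mem_union]; omega
    rw [hunion]
    exact measureReal_union
      (Set.disjoint_left.2 fun ω h₁ h₂ => by simp only [Set.mem_ofPred_eq] at h₁ h₂; omega)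
      (hS (.of_discrete (s := {m : ℕ | (m : ℤ) = t - 1})))
  simp only [tailGap, Pi.add_apply]
  rw [hind.measureReal_setOf_add hZ hS hZval (fun m => t ≤ (m : ℤ)),
    hind.measureReal_setOf_add hZ hS hZval (fun m => t ≤ ((n + 1 : ℕ) : ℤ) - m)]
  simp only [hsucc_of_one, hfail_of_one, hfail_of_zero, hsucc_pred]
  ring

lemma half_lt_measure_gt_add_half_mul_measure_eq [IsProbabilityMeasure μ] {W : Ω → ℝ}
    (hW : Measurable W) (c : ℝ) (h : μ {ω | W ω < c} < μ {ω | c < W ω}) :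
    1 / 2 < μ {ω | c < W ω} + 1 / 2 * μ {ω | W ω = c} := by
  have hlt : μ.real {ω | W ω < c} < μ.real {ω | c < W ω} :=
    (ENNReal.toReal_lt_toReal (measure_ne_top _ _) (measure_ne_top _ _)).2 h
  have htotal : μ.real {ω | c < W ω} + μ.real {ω | W ω = c} + μ.real {ω | W ω < c} = 1 := by
    have hcover : {ω | c < W ω} ∪ {ω | W ω = c} ∪ {ω | W ω < c} = Set.univ := by
      ext ω; simpa [or_assoc, eq_comm] using lt_trichotomy c (W ω)
    rw [← measureReal_union, ← measureReal_union, hcover, probReal_univ]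
    · exact Set.disjoint_union_left.2
        ⟨Set.disjoint_left.2 fun ω h₁ h₂ => by simp only [Set.mem_ofPred_eq] at h₁ h₂; linarith,
         Set.disjoint_left.2 fun ω h₁ h₂ => by simp only [Set.mem_ofPred_eq] at h₁ h₂; linarith⟩
    · exact measurableSet_lt hW measurable_const
    · exact Set.disjoint_left.2 fun ω h₁ h₂ => by simp only [Set.mem_ofPred_eq] at h₁ h₂; linarith
    · exact measurableSet_eq_fun hW measurable_const
  refine (ENNReal.toReal_lt_toReal (by norm_num) (by finiteness)).1 ?_
  rw [ENNReal.toReal_add (by finiteness) (by finiteness), ENNReal.toReal_mul]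
  simp only [← measureReal_def]
  norm_num
  linarith

variable {X : ι → Ω → ℕ}

lemma iIndepFun.measure_sum_eq_card_ne_zero (hind : iIndepFun X μ)
    (hpos : ∀ i, μ {ω | X i ω = 1} ≠ 0) (s : Finset ι) :
    μ {ω | ∑ i ∈ s, X i ω = s.card} ≠ 0 := by
  have hall : μ (⋂ i ∈ s, X i ⁻¹' {1}) ≠ 0 := by
    rw [hind.measure_inter_preimage_eq_mul s fun _ _ => .of_discrete]
    exact Finset.prod_ne_zero_iff.2 fun i _ => hpos i
  refine fun h => hall (measure_mono_null (fun ω hω => ?_) h)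
  simp only [Set.mem_iInter, Set.mem_preimage, Set.mem_singleton_iff] at hω
  simp [Finset.sum_congr rfl hω]

theorem iIndepFun.tailGap_sum_nonneg_and_pos [IsProbabilityMeasure μ] (hind : iIndepFun X μ)
    (hmeas : ∀ i, Measurable (X i)) (hval : ∀ i ω, X i ω = 0 ∨ X i ω = 1)
    (hp : ∀ i, 1 / 2 < μ.real {ω | X i ω = 1}) (s : Finset ι) (t : ℤ) :
    0 ≤ tailGap μ (fun ω => ∑ i ∈ s, X i ω) s.card t
      ∧ (1 ≤ t → t ≤ s.card → 0 < tailGap μ (fun ω => ∑ i ∈ s, X i ω) s.card t) := by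
  induction s using Finset.cons_induction generalizing t with
  | empty => exact ⟨by simp [tailGap], fun h₁ h₂ => by simp only [Finset.card_empty, Nat.cast_zero] at h₂; omega⟩
  | cons j s hj ih =>
    have hS : Measurable fun ω => ∑ i ∈ s, X i ω := Finset.measurable_sum s fun i _ => hmeas i
    have hindep : IndepFun (X j) (fun ω => ∑ i ∈ s, X i ω) μ := by
      simpa only [Finset.sum_fn] using (hind.indepFun_finsetSum_of_notMem hmeas hj).symm
    rw [show (fun ω => ∑ i ∈ Finset.cons j s hj, X i ω) = X j + fun ω => ∑ i ∈ s, X i ω from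
      funext fun ω => Finset.sum_cons hj, Finset.card_cons,
      hindep.tailGap_add (hmeas j) hS (hval j)]
    obtain ⟨hgap, hgap_pos⟩ := ih t
    obtain ⟨hgap_pred, -⟩ := ih (t - 1)
    set p := μ.real {ω | X j ω = 1}
    have hp_half : 1 / 2 < p := hp j
    have hp_le : p ≤ 1 := measureReal_le_one
    set q := μ.real {ω | ((∑ i ∈ s, X i ω : ℕ) : ℤ) = t - 1}
    have hq : 0 ≤ q := measureReal_nonneg
    have hgap_term := mul_nonneg (by linarith : 0 ≤ p) hgap
    have hgap_pred_term := mul_nonneg (by linarith : 0 ≤ 1 - p) hgap_pred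
    have hlevel_term := mul_nonneg (by linarith : 0 ≤ 2 * p - 1) hq
    refine ⟨by linarith, fun h₁ h₂ => ?_⟩
    rcases (show t ≤ s.card ∨ t = s.card + 1 by push_cast at h₂; omega) with ht | ht
    · linarith [mul_pos (by linarith : 0 < p) (hgap_pos h₁ ht)]
    · have hq_pos : 0 < q := by
        have hlevel : {ω | ((∑ i ∈ s, X i ω : ℕ) : ℤ) = t - 1}
            = {ω | ∑ i ∈ s, X i ω = s.card} := by
          ext ω; simp only [Set.mem_ofPred_eq]; omega
        rw [show q = μ.real {ω | ∑ i ∈ s, X i ω = s.card} by rw [← hlevel]]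
        refine ENNReal.toReal_pos (hind.measure_sum_eq_card_ne_zero (fun i h => ?_) s)
          (by finiteness)
        have := hp i
        rw [measureReal_def, h] at this
        norm_num at this
      linarith [mul_pos (by linarith : 0 < 2 * p - 1) hq_pos]

end ProbabilityTheory

theorem majority_vote_correct
    {Ω : Type*} [MeasurableSpace Ω] (μ : Measure Ω) [IsProbabilityMeasure μ]
    (k : ℕ) (hk : 1 ≤ k) (X : Fin k → Ω → ℕ)
    (hmeas : ∀ i, Measurable (X i))
    (hval : ∀ i ω, X i ω = 0 ∨ X i ω = 1)
    (hind : iIndepFun (m := fun _ => inferInstance) X μ)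
    (hp : ∀ i, (1 / 2 : ENNReal) < μ {ω | X i ω = 1}) :
    (1 / 2 : ENNReal)
      < μ {ω | (k : ℝ) / 2 < ((∑ i, X i ω : ℕ) : ℝ)}
        + (1 / 2) * μ {ω | ((∑ i, X i ω : ℕ) : ℝ) = (k : ℝ) / 2} := by
  have hp_real (i : Fin k) : 1 / 2 < μ.real {ω | X i ω = 1} := by
    rw [measureReal_def]
    simpa using (ENNReal.toReal_lt_toReal (by norm_num) (measure_ne_top _ _)).2 (hp i)
  have hgap := (hind.tailGap_sum_nonneg_and_pos hmeas hval hp_real Finset.univ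
    ((k / 2 + 1 : ℕ) : ℤ)).2 (by omega) (by simp only [Finset.card_univ, Fintype.card_fin]; omega)
  rw [tailGap, sub_pos, Finset.card_univ, Fintype.card_fin] at hgap
  have hmajority (m : ℕ) : (k : ℝ) / 2 < m ↔ ((k / 2 + 1 : ℕ) : ℤ) ≤ m := by
    rw [div_lt_iff₀ two_pos]; norm_cast; omega
  have hminority (m : ℕ) : (m : ℝ) < k / 2 ↔ ((k / 2 + 1 : ℕ) : ℤ) ≤ k - m := by
    rw [lt_div_iff₀ two_pos, ← show (m : ℤ) * 2 < k ↔ ((k / 2 + 1 : ℕ) : ℤ) ≤ k - m by omega]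
    norm_cast
  refine half_lt_measure_gt_add_half_mul_measure_eq (W := fun ω => ((∑ i, X i ω : ℕ) : ℝ))
    (measurable_from_nat.comp (Finset.measurable_sum _ fun i _ => hmeas i)) _ ?_
  simp only [hmajority, hminority]
  exact (ENNReal.toReal_lt_toReal (by finiteness) (by finiteness)).1 hgap
end

section
/- Let β be a set of ordered pairs of distinct items from {1,…,n} (each pair (i,i') ∈ β meaning i is ranked above i'), and let π be a permutation consistent with β. Suppose (a₁,b₁), …, (a_ℓ,b_ℓ) are ℓ pairs of items, all 2ℓ items distinct, such that for each k the items a_k and b_k occupy adjacent positions in π, and the permutation obtained from π by swapping only a_k and b_k is also consistent with β. Then for every subset T ⊆ {1,…,ℓ}, the permutation obtained from π by simultaneously swapping the pairs indexed by T is consistent with β. In particular, the number of permutations consistent with β is at least 2^ℓ. -/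
/-
Exchanging two items that are adjacent in a ranking `σ` acts on ranks as the transposition of
two consecutive values, which preserves every strict comparison except the one between the two
items themselves. So if neither item is required by `β` to precede the other, the new ranking
is again consistent with `β`. A flippable pair is incomparable under `β` (flipping it alone
keeps `π` consistent), and since the pairs are disjoint, flipping some of them leaves the
others adjacent; flipping the pairs of `T` one at a time therefore stays consistent. Different
sets `T` give different rankings, which yields `2 ^ ℓ` of them.
-/

/-- A permutation (ranking) `σ` is consistent with a set `β` of directed comparison pairs if
for every `(i, i') ∈ β`, item `i` is assigned a smaller rank than item `i'`. -/
def ConsistentWith {n : ℕ} (β : Set (Fin n × Fin n)) (σ : Equiv.Perm (Fin n)) : Prop :=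
  ∀ p ∈ β, σ p.1 < σ p.2

open Equiv Finset

theorem swap_apply_lt_swap_apply_of_covBy {α : Type*} [LinearOrder α] {r s u v : α}
    (hrs : r ⋖ s) (huv : u < v) (hne : ¬(u = r ∧ v = s)) : swap r s u < swap r s v := by
  have hr : r < v → s ≤ v := hrs.ge_of_gt
  have hs : u < s → u ≤ r := hrs.le_of_lt
  grind [hrs.lt]

theorem ConsistentWith.notMem_of_swap_trans {n : ℕ} {β : Set (Fin n × Fin n)}
    {σ : Perm (Fin n)} {x y : Fin n} (hσ : ConsistentWith β σ)
    (hswap : ConsistentWith β ((swap x y).trans σ)) : (x, y) ∉ β := fun hxy =>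
  (hσ _ hxy).not_gt (by simpa using hswap _ hxy)

theorem ConsistentWith.swap_trans_of_covBy {n : ℕ} {β : Set (Fin n × Fin n)}
    {σ : Perm (Fin n)} {x y : Fin n} (hσ : ConsistentWith β σ) (hxy : σ x ⋖ σ y)
    (hβ : (x, y) ∉ β) : ConsistentWith β ((swap x y).trans σ) := by
  rintro ⟨i, i'⟩ hii'
  simp only [trans_apply, σ.injective.map_swap]
  refine swap_apply_lt_swap_apply_of_covBy hxy (hσ _ hii') ?_
  rintro ⟨hi, hi'⟩
  rw [σ.injective hi, σ.injective hi'] at hii'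
  exact hβ hii'

section SwapPairs

variable {α ι : Type*} [DecidableEq α] {a b : ι → α}

theorem commute_swap_swap {x y z w : α} (hxz : x ≠ z) (hxw : x ≠ w) (hyz : y ≠ z)
    (hyw : y ≠ w) : Commute (swap x y) (swap z w) := by
  ext i
  grind [Perm.mul_apply]

variable
    (hdist : Pairwise fun k k' => a k ≠ a k' ∧ a k ≠ b k' ∧ b k ≠ a k' ∧ b k ≠ b k')

noncomputable def swapPairs (T : Finset ι) : Perm α :=
  T.noncommProd (fun k => swap (a k) (b k)) fun _ _ _ _ hkk' =>
    let ⟨h₁, h₂, h₃, h₄⟩ := hdist hkk'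
    commute_swap_swap h₁ h₂ h₃ h₄

theorem swapPairs_insert [DecidableEq ι] {T : Finset ι} {j : ι} (hj : j ∉ T) :
    swapPairs hdist (insert j T) = swapPairs hdist T * swap (a j) (b j) :=
  noncommProd_insert_of_notMem' _ _ _ _ hj

theorem swapPairs_apply_of_forall_ne [DecidableEq ι] {T : Finset ι} {x : α}
    (hx : ∀ k ∈ T, x ≠ a k ∧ x ≠ b k) : swapPairs hdist T x = x := by
  induction T using Finset.induction_on with
  | empty => rfl
  | insert j T hj ih =>
    have hxj := hx j (mem_insert_self j T)
    rw [swapPairs_insert hdist hj, Perm.mul_apply, swap_apply_of_ne_of_ne hxj.1 hxj.2,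
      ih fun k hk => hx k (mem_insert_of_mem hk)]

theorem swapPairs_apply_left_of_notMem [DecidableEq ι] {T : Finset ι} {k : ι} (hk : k ∉ T) :
    swapPairs hdist T (a k) = a k :=
  swapPairs_apply_of_forall_ne hdist fun _ hk' =>
    let ⟨h₁, h₂, _, _⟩ := hdist (ne_of_mem_of_not_mem hk' hk).symm
    ⟨h₁, h₂⟩

theorem swapPairs_apply_right_of_notMem [DecidableEq ι] {T : Finset ι} {k : ι} (hk : k ∉ T) :
    swapPairs hdist T (b k) = b k :=
  swapPairs_apply_of_forall_ne hdist fun _ hk' =>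
    let ⟨_, _, h₃, h₄⟩ := hdist (ne_of_mem_of_not_mem hk' hk).symm
    ⟨h₃, h₄⟩

theorem swapPairs_apply_left [DecidableEq ι] {T : Finset ι} {k : ι} (hk : k ∈ T) :
    swapPairs hdist T (a k) = b k := by
  rw [← insert_erase hk, swapPairs_insert hdist (notMem_erase k T), Perm.mul_apply,
    swap_apply_left, swapPairs_apply_right_of_notMem hdist (notMem_erase k T)]

theorem swapPairs_apply_right [DecidableEq ι] {T : Finset ι} {k : ι} (hk : k ∈ T) :
    swapPairs hdist T (b k) = a k := by
  rw [← insert_erase hk, swapPairs_insert hdist (notMem_erase k T), Perm.mul_apply,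
    swap_apply_right, swapPairs_apply_left_of_notMem hdist (notMem_erase k T)]

theorem eq_swapPairs [DecidableEq ι] {T : Finset ι} {e : Perm α}
    (he : ∀ k ∈ T, e (a k) = b k ∧ e (b k) = a k)
    (hfix : ∀ x, (∀ k ∈ T, x ≠ a k ∧ x ≠ b k) → e x = x) : e = swapPairs hdist T := by
  ext x
  by_cases hx : ∀ k ∈ T, x ≠ a k ∧ x ≠ b k
  · rw [hfix x hx, swapPairs_apply_of_forall_ne hdist hx]
  push Not at hx
  obtain ⟨k, hk, hxk⟩ := hx
  by_cases hxa : x = a k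
  · rw [hxa, (he k hk).1, swapPairs_apply_left hdist hk]
  · rw [hxk hxa, (he k hk).2, swapPairs_apply_right hdist hk]

theorem mem_iff_swapPairs_apply_ne [DecidableEq ι] {T : Finset ι} {k : ι} (hab : a k ≠ b k) :
    k ∈ T ↔ swapPairs hdist T (a k) ≠ a k := by
  refine ⟨fun hk => ?_, fun h => by_contra fun hk => h ?_⟩
  · rw [swapPairs_apply_left hdist hk]
    exact hab.symm
  · exact swapPairs_apply_left_of_notMem hdist hk

theorem swapPairs_injective [DecidableEq ι] (hab : ∀ k, a k ≠ b k) :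
    Function.Injective (swapPairs hdist) := by
  intro T S h
  ext k
  rw [mem_iff_swapPairs_apply_ne hdist (hab k), mem_iff_swapPairs_apply_ne hdist (hab k), h]

end SwapPairs

theorem ConsistentWith.swapPairs_trans {ι : Type*} [DecidableEq ι] {n : ℕ}
    {β : Set (Fin n × Fin n)} {π : Perm (Fin n)} {a b : ι → Fin n}
    (hdist : Pairwise fun k k' => a k ≠ a k' ∧ a k ≠ b k' ∧ b k ≠ a k' ∧ b k ≠ b k')
    (hπ : ConsistentWith β π) (hadj : ∀ k, π (a k) ⋖ π (b k) ∨ π (b k) ⋖ π (a k))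
    (hflip : ∀ k, ConsistentWith β ((swap (a k) (b k)).trans π)) (T : Finset ι) :
    ConsistentWith β ((swapPairs hdist T).trans π) := by
  induction T using Finset.induction_on with
  | empty => exact hπ
  | insert j T hj ih =>
    set σ := (swapPairs hdist T).trans π
    have hσa : σ (a j) = π (a j) := congrArg π (swapPairs_apply_left_of_notMem hdist hj)
    have hσb : σ (b j) = π (b j) := congrArg π (swapPairs_apply_right_of_notMem hdist hj)
    rw [swapPairs_insert hdist hj, Perm.mul_def, trans_assoc]
    rcases hadj j with h | h
    · exact ih.swap_trans_of_covBy (by rwa [hσa, hσb]) (hπ.notMem_of_swap_trans (hflip j))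
    · rw [swap_comm]
      refine ih.swap_trans_of_covBy (by rwa [hσa, hσb]) (hπ.notMem_of_swap_trans ?_)
      rw [swap_comm]
      exact hflip j

theorem flippable_pairs_generate_topological_orderings
    (n ℓ : ℕ) (β : Set (Fin n × Fin n))
    (π : Equiv.Perm (Fin n)) (hπ : ConsistentWith β π)
    (a b : Fin ℓ → Fin n)
    (hab : ∀ k, a k ≠ b k)
    (hdist : ∀ k k', k ≠ k' →
      a k ≠ a k' ∧ a k ≠ b k' ∧ b k ≠ a k' ∧ b k ≠ b k')
    (hadj : ∀ k, (π (a k) : ℕ) + 1 = (π (b k) : ℕ) ∨ (π (b k) : ℕ) + 1 = (π (a k) : ℕ))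
    (hflip : ∀ k, ConsistentWith β ((Equiv.swap (a k) (b k)).trans π)) :
    (∀ T : Finset (Fin ℓ), ∀ e : Equiv.Perm (Fin n),
      (∀ k ∈ T, e (a k) = b k ∧ e (b k) = a k) →
      (∀ i : Fin n, (∀ k ∈ T, i ≠ a k ∧ i ≠ b k) → e i = i) →
      ConsistentWith β (e.trans π)) ∧
    2 ^ ℓ ≤ Set.ncard {σ : Equiv.Perm (Fin n) | ConsistentWith β σ} := by
  have hcovBy : ∀ k, π (a k) ⋖ π (b k) ∨ π (b k) ⋖ π (a k) := by
    simpa [Fin.covBy_iff] using hadj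
  have hcons := hπ.swapPairs_trans hdist hcovBy hflip
  refine ⟨fun T e he hfix => eq_swapPairs hdist he hfix ▸ hcons T, ?_⟩
  calc 2 ^ ℓ = (Set.univ : Set (Finset (Fin ℓ))).ncard := by simp
    _ ≤ _ := Set.ncard_le_ncard_of_injOn (fun T => (swapPairs hdist T).trans π)
      (fun T _ => hcons T) ((mul_right_injective π).comp (swapPairs_injective hdist hab)).injOn
      (Set.toFinite _)
end

section
/- Let β be a set of ordered pairs of distinct items from {1,…,n} (directed comparison edges) and let i ≠ i' be two items that are topologically identical under β: neither (i,i') nor (i',i) belongs to β, and for every other item ℓ, (i,ℓ) ∈ β ⇔ (i',ℓ) ∈ β and (ℓ,i) ∈ β ⇔ (ℓ,i') ∈ β. Then the operation of exchanging the ranks of items i and i' is a bijection from the set of permutations consistent with β that rank i above i' onto the set of permutations consistent with β that rank i' above i. Consequently these two sets have equal cardinality, and exactly half of all permutations consistent with β rank i above i'. -/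
/-!
Since `i` and `i'` are not compared with each other and are compared in the same way with every
other item, the transposition `swap i i'` maps every comparison of `β` between distinct items to a
comparison of `β`. Precomposing a consistent ranking with it therefore gives a consistent ranking
in which the relative order of `i` and `i'` is reversed; being an involution, this is a bijection
between the two halves, which partition the consistent rankings as rankings are injective.
-/

open Equiv Set

variable {α γ : Type*} {β : Set (α × α)} {i i' : α}

structure TopologicallyIdentical (β : Set (α × α)) (i i' : α) : Prop where
  not_mem : (i, i') ∉ β
  not_mem' : (i', i) ∉ β
  fst_mem_iff : ∀ l, l ≠ i → l ≠ i' → ((i, l) ∈ β ↔ (i', l) ∈ β)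
  snd_mem_iff : ∀ l, l ≠ i → l ≠ i' → ((l, i) ∈ β ↔ (l, i') ∈ β)

def IsConsistent [Preorder γ] (β : Set (α × α)) (σ : α → γ) : Prop :=
  ∀ p ∈ β, σ p.1 < σ p.2

def consistentRankingsWithLt [Preorder γ] (β : Set (α × α)) (i i' : α) : Set (α ≃ γ) :=
  {σ | IsConsistent β σ ∧ σ i < σ i'}

namespace TopologicallyIdentical

theorem symm (h : TopologicallyIdentical β i i') : TopologicallyIdentical β i' i where
  not_mem := h.not_mem'
  not_mem' := h.not_mem
  fst_mem_iff l hl' hl := (h.fst_mem_iff l hl hl').symm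
  snd_mem_iff l hl' hl := (h.snd_mem_iff l hl hl').symm

variable [DecidableEq α]

theorem swap_fst_mem (h : TopologicallyIdentical β i i') {a l : α} (hli : l ≠ i) (hli' : l ≠ i')
    (hp : (a, l) ∈ β) : (swap i i' a, l) ∈ β := by
  rcases eq_or_ne a i with rfl | hai
  · simpa using (h.fst_mem_iff l hli hli').1 hp
  rcases eq_or_ne a i' with rfl | hai'
  · simpa using (h.fst_mem_iff l hli hli').2 hp
  · rwa [swap_apply_of_ne_of_ne hai hai']

theorem swap_snd_mem (h : TopologicallyIdentical β i i') {a l : α} (hli : l ≠ i) (hli' : l ≠ i')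
    (hp : (l, a) ∈ β) : (l, swap i i' a) ∈ β := by
  rcases eq_or_ne a i with rfl | hai
  · simpa using (h.snd_mem_iff l hli hli').1 hp
  rcases eq_or_ne a i' with rfl | hai'
  · simpa using (h.snd_mem_iff l hli hli').2 hp
  · rwa [swap_apply_of_ne_of_ne hai hai']

theorem swap_mem (h : TopologicallyIdentical β i i') {a b : α} (hab : a ≠ b) (hp : (a, b) ∈ β) :
    (swap i i' a, swap i i' b) ∈ β := by
  by_cases hb : b ≠ i ∧ b ≠ i'
  · rw [swap_apply_of_ne_of_ne hb.1 hb.2]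
    exact h.swap_fst_mem hb.1 hb.2 hp
  by_cases ha : a ≠ i ∧ a ≠ i'
  · rw [swap_apply_of_ne_of_ne ha.1 ha.2]
    exact h.swap_snd_mem ha.1 ha.2 hp
  have ha : a = i ∨ a = i' := by tauto
  have hb : b = i ∨ b = i' := by tauto
  rcases ha with rfl | rfl <;> rcases hb with rfl | rfl
  exacts [absurd rfl hab, absurd hp h.not_mem, absurd hp h.not_mem', absurd rfl hab]

theorem isConsistent_comp_swap [Preorder γ] (h : TopologicallyIdentical β i i') {σ : α → γ}
    (hσ : IsConsistent β σ) : IsConsistent β (σ ∘ swap i i') := by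
  rintro ⟨a, b⟩ hp
  rcases eq_or_ne a b with rfl | hab
  · exact absurd (hσ _ hp) (lt_irrefl _)
  · exact hσ _ (h.swap_mem hab hp)

theorem mapsTo_swap_trans [Preorder γ] (h : TopologicallyIdentical β i i') :
    MapsTo (fun σ : α ≃ γ => (swap i i').trans σ)
      (consistentRankingsWithLt β i i') (consistentRankingsWithLt β i' i) := by
  rintro σ ⟨hσ, hlt⟩
  refine ⟨h.isConsistent_comp_swap hσ, ?_⟩
  simpa using hlt

theorem bijOn_swap_trans [Preorder γ] (h : TopologicallyIdentical β i i') :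
    BijOn (fun σ : α ≃ γ => (swap i i').trans σ)
      (consistentRankingsWithLt β i i') (consistentRankingsWithLt β i' i) := by
  have hinv : ∀ σ : α ≃ γ, (swap i i').trans ((swap i i').trans σ) = σ := fun σ => by
    ext; simp
  refine InvOn.bijOn ⟨fun σ _ => hinv σ, fun σ _ => hinv σ⟩ h.mapsTo_swap_trans ?_
  simpa only [swap_comm i' i] using h.symm.mapsTo_swap_trans (γ := γ)

end TopologicallyIdentical

theorem ncard_consistentRankingsWithLt_add_ncard [Finite α] [Finite γ] [LinearOrder γ]
    (hii : i ≠ i') :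
    (consistentRankingsWithLt (γ := γ) β i i').ncard +
        (consistentRankingsWithLt (γ := γ) β i' i).ncard =
      {σ : α ≃ γ | IsConsistent β (σ : α → γ)}.ncard := by
  rw [← ncard_union_eq]
  · congr 1
    ext σ
    have hne : σ i ≠ σ i' := σ.injective.ne hii
    simp only [consistentRankingsWithLt, mem_union, mem_ofPred_eq, ← and_or_left,
      and_iff_left_iff_imp]
    exact fun _ => hne.lt_or_gt
  · exact disjoint_left.2 fun σ hσ hσ' => lt_asymm hσ.2 hσ'.2

theorem topologically_identical_pair_halves
    (n : ℕ) (β : Set (Fin n × Fin n)) (i i' : Fin n) (hii : i ≠ i')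
    (h1 : (i, i') ∉ β) (h2 : (i', i) ∉ β)
    (h3 : ∀ l : Fin n, l ≠ i → l ≠ i' →
      (((i, l) ∈ β ↔ (i', l) ∈ β) ∧ ((l, i) ∈ β ↔ (l, i') ∈ β))) :
    Set.BijOn (fun σ : Equiv.Perm (Fin n) => (Equiv.swap i i').trans σ)
      {σ : Equiv.Perm (Fin n) | (∀ p ∈ β, σ p.1 < σ p.2) ∧ σ i < σ i'}
      {σ : Equiv.Perm (Fin n) | (∀ p ∈ β, σ p.1 < σ p.2) ∧ σ i' < σ i} ∧
    Set.ncard {σ : Equiv.Perm (Fin n) | (∀ p ∈ β, σ p.1 < σ p.2) ∧ σ i < σ i'}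
      = Set.ncard {σ : Equiv.Perm (Fin n) | (∀ p ∈ β, σ p.1 < σ p.2) ∧ σ i' < σ i} ∧
    2 * Set.ncard {σ : Equiv.Perm (Fin n) | (∀ p ∈ β, σ p.1 < σ p.2) ∧ σ i < σ i'}
      = Set.ncard {σ : Equiv.Perm (Fin n) | ∀ p ∈ β, σ p.1 < σ p.2} := by
  have h : TopologicallyIdentical β i i' :=
    ⟨h1, h2, fun l hl hl' => (h3 l hl hl').1, fun l hl hl' => (h3 l hl hl').2⟩
  have hbij := h.bijOn_swap_trans (γ := Fin n)
  have hcard := hbij.ncard_eq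
  refine ⟨hbij, hcard, ?_⟩
  have hsum := ncard_consistentRankingsWithLt_add_ncard (β := β) (γ := Fin n) hii
  rw [← hcard] at hsum
  rwa [two_mul]
end

section
/- Let w : [0,∞) → [0,1) be strictly increasing and let w̃ : ℝ → (0,1) be defined by w̃(x) = (1 + w(x))/2 for x > 0, w̃(0) = 1/2, and w̃(x) = (1 − w(−x))/2 for x < 0. Let f₁, f₂ : ℝ → ℝ be strictly increasing, let x₁ > x₂ be reals, and let ε₁, ε₂ be i.i.d. real-valued random variables with arbitrary common distribution. Then E[w̃(f₁(x₁) − f₂(x₂) + ε₁ − ε₂)] > E[w̃(f₁(x₂) − f₂(x₁) + ε₁ − ε₂)]. Consequently, in the canonical setting where each reported score is perturbed by i.i.d. additive noise (reviewer j grading item i reports f_j(x_i) + ε_{ij}), the randomized canonical estimator's probability of correctly identifying the larger item, namely (1/2)·E[1 + w̃(f₁(x₁) − f₂(x₂) + ε₁ − ε₂) − w̃(f₁(x₂) − f₂(x₁) + ε₁ − ε₂)], is strictly greater than 1/2 for every choice of item values, strictly increasing calibration functions, and noise distribution; i.e., the canonical estimator strictly uniformly dominates random guessing in the presence of noise. 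-/
/-!
The weight `w̃` is strictly increasing on all of `ℝ`: it is so on `[0, ∞)`, and `w̃ - 1/2` is odd.
Since `x₁ > x₂` and `f₁, f₂` are increasing, `f₁ x₁ - f₂ x₂ > f₁ x₂ - f₂ x₁`, so for every
realisation of the noise the first argument of `w̃` is larger than the second. Hence the
integrands, which are bounded, are pointwise strictly ordered, and a pointwise strict inequality
between integrable functions survives integration against a nonzero measure.
-/

open MeasureTheory Set

namespace MeasureTheory

variable {α : Type*} [MeasurableSpace α] {μ : Measure α}

theorem integral_lt_integral_of_forall_lt [NeZero μ] {f g : α → ℝ} (hf : Integrable f μ)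
    (hg : Integrable g μ) (hfg : ∀ x, f x < g x) : ∫ x, f x ∂μ < ∫ x, g x ∂μ := by
  have hsupp : Function.support (fun x ↦ g x - f x) = univ :=
    eq_univ_of_forall fun x ↦ (sub_pos.2 (hfg x)).ne'
  rw [← sub_pos, ← integral_sub hg hf,
    integral_pos_iff_support_of_nonneg (fun x ↦ (sub_pos.2 (hfg x)).le) (hg.sub hf), hsupp]
  exact Measure.measure_univ_pos.2 (NeZero.ne μ)

theorem _root_.Monotone.integrable_comp [IsFiniteMeasure μ] {φ : ℝ → ℝ} (hφ : Monotone φ)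
    {C : ℝ} (hC : ∀ x, |φ x| ≤ C) {X : α → ℝ} (hX : Measurable X) :
    Integrable (fun a ↦ φ (X a)) μ :=
  .of_bound (hφ.measurable.comp hX).aestronglyMeasurable C (ae_of_all _ fun a ↦ hC (X a))

end MeasureTheory

/-- The symmetrisation `w̃` of a weight `w : [0, ∞) → [0, 1)`. -/
noncomputable def canonicalWeight (w : ℝ → ℝ) (x : ℝ) : ℝ :=
  if 0 < x then (1 + w x) / 2 else if x = 0 then 1 / 2 else (1 - w (-x)) / 2

namespace canonicalWeight

variable {w : ℝ → ℝ}

@[simp]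
theorem zero : canonicalWeight w 0 = 1 / 2 := by
  simp [canonicalWeight]

theorem neg (x : ℝ) : canonicalWeight w (-x) = 1 - canonicalWeight w x := by
  rcases lt_trichotomy x 0 with hx | rfl | hx
  · simp only [canonicalWeight, neg_pos.2 hx, ↓reduceIte, not_lt.2 hx.le, hx.ne]
    ring
  · rw [neg_zero, zero]
    norm_num
  · simp only [canonicalWeight, not_lt.2 (neg_nonpos.2 hx.le), ↓reduceIte, neg_eq_zero, hx.ne',
      neg_neg, hx]
    ring

theorem strictMonoOn_nonneg (hw0 : 0 ≤ w 0) (hw : StrictMonoOn w (Ici 0)) :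
    StrictMonoOn (canonicalWeight w) (Ici 0) := by
  intro x hx y hy hxy
  have hy0 : 0 < y := lt_of_le_of_lt hx hxy
  rcases (mem_Ici.1 hx).eq_or_lt with rfl | hx0
  · have := hw self_mem_Ici hy hy0
    rw [zero, canonicalWeight, if_pos hy0]
    linarith
  · have := hw hx hy hxy
    simp only [canonicalWeight, hx0, hy0, if_true]
    linarith

theorem strictMono (hw0 : 0 ≤ w 0) (hw : StrictMonoOn w (Ici 0)) :
    StrictMono (canonicalWeight w) := by
  have hcentered : StrictMono fun x ↦ canonicalWeight w x - 1 / 2 :=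
    strictMono_of_odd_strictMonoOn_nonneg (fun x ↦ by rw [neg]; ring)
      fun x hx y hy hxy ↦ sub_lt_sub_right (strictMonoOn_nonneg hw0 hw hx hy hxy) _
  exact fun x y hxy ↦ by simpa using hcentered hxy

theorem mem_Ioo (hw : ∀ x, 0 ≤ x → w x ∈ Ico 0 1) (x : ℝ) : canonicalWeight w x ∈ Ioo 0 1 := by
  have hnonneg : ∀ x, 0 ≤ x → canonicalWeight w x ∈ Ico (1 / 2) 1 := by
    intro x hx
    rcases hx.eq_or_lt with rfl | hx0
    · rw [zero]
      norm_num
    · have := hw x hx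
      simp only [canonicalWeight, hx0, if_true, mem_Ico] at this ⊢
      constructor <;> linarith [this.1, this.2]
  rcases le_total 0 x with hx | hx
  · have := hnonneg x hx
    exact ⟨by linarith [this.1], this.2⟩
  · have := hnonneg (-x) (neg_nonneg.2 hx)
    rw [neg, mem_Ico] at this
    constructor <;> linarith [this.1, this.2]

theorem abs_le_one (hw : ∀ x, 0 ≤ x → w x ∈ Ico 0 1) (x : ℝ) : |canonicalWeight w x| ≤ 1 :=
  abs_le.2 ⟨by linarith [(mem_Ioo hw x).1], (mem_Ioo hw x).2.le⟩

end canonicalWeight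

theorem canonical_estimator_dominates_random_guessing_noisy
    (w : ℝ → ℝ)
    (hw01 : ∀ x : ℝ, 0 ≤ x → w x ∈ Set.Ico (0 : ℝ) 1)
    (hwmono : ∀ x y : ℝ, 0 ≤ x → x < y → w x < w y)
    (wt : ℝ → ℝ)
    (hwt : ∀ x : ℝ, wt x =
      if 0 < x then (1 + w x) / 2 else if x = 0 then 1 / 2 else (1 - w (-x)) / 2)
    (f₁ f₂ : ℝ → ℝ) (hf₁ : StrictMono f₁) (hf₂ : StrictMono f₂)
    (x₁ x₂ : ℝ) (hx : x₂ < x₁)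
    (ν : Measure ℝ) [IsProbabilityMeasure ν] :
    (∫ e : ℝ × ℝ, wt (f₁ x₂ - f₂ x₁ + e.1 - e.2) ∂(ν.prod ν)
        < ∫ e : ℝ × ℝ, wt (f₁ x₁ - f₂ x₂ + e.1 - e.2) ∂(ν.prod ν)) ∧
    ((1 / 2 : ℝ) < (1 / 2) *
      ∫ e : ℝ × ℝ,
        (1 + wt (f₁ x₁ - f₂ x₂ + e.1 - e.2) - wt (f₁ x₂ - f₂ x₁ + e.1 - e.2))
          ∂(ν.prod ν)) := by
  obtain rfl : wt = canonicalWeight w := funext hwt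
  have hmono : StrictMono (canonicalWeight w) :=
    canonicalWeight.strictMono (hw01 0 le_rfl).1 fun x hx y _ hxy ↦ hwmono x y hx hxy
  have hint (c : ℝ) :
      Integrable (fun e : ℝ × ℝ ↦ canonicalWeight w (c + e.1 - e.2)) (ν.prod ν) :=
    hmono.monotone.integrable_comp (canonicalWeight.abs_le_one hw01) (by fun_prop)
  have hscores : f₁ x₂ - f₂ x₁ < f₁ x₁ - f₂ x₂ := by linarith [hf₁ hx, hf₂ hx]
  have hlt := integral_lt_integral_of_forall_lt (hint _) (hint _)
    fun e ↦ hmono (by linarith : f₁ x₂ - f₂ x₁ + e.1 - e.2 < f₁ x₁ - f₂ x₂ + e.1 - e.2)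
  refine ⟨hlt, ?_⟩
  rw [integral_sub ?_ (hint _), integral_add (integrable_const 1) (hint _), integral_const]
  · simp only [probReal_univ, one_smul]
    linarith
  · exact (integrable_const 1).add (hint _)
end
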